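/- The number of set partitions of [n] (n ≥ 2) avoiding both patterns 1/23 and 13/2/4 is 2(n−1). -/

import Mathlib

/-- The set partition `σ` of `[n]` (as an equivalence relation on `Fin n`)
contains the pattern `π` (a set partition of `[k]`): some increasing choice of
`k` elements of `[n]` has the same same-block relation as `π`. -/
def SContains {n k : ℕ} (σ : Setoid (Fin n)) (π : Setoid (Fin k)) : Prop :=
  ∃ f : Fin k → Fin n, StrictMono f ∧ ∀ a b : Fin k, σ.r (f a) (f b) ↔ π.r a b

/-- The set partition associated to an RGF word: `i` and `j` are in the same
block iff the letters agree. -/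
def pat (l : List ℕ) : Setoid (Fin l.length) := Setoid.ker l.get

/-! Avoiding `1/23` forces every block other than the block `s` of `1` to be a singleton: a pair
`b < c` in one block pulls every `a < b` into it. Then avoiding `1/23` says that `s` minus its
largest element is an initial segment, and avoiding `13/2/4` says that this largest element, when it
is not adjacent to that segment, is `n`. So `s = {1, …, k}` (`n` choices) or `s = {1, …, k, n}` with
`k ≤ n - 2` (`n - 2` choices). -/

theorem pat_rel_iff {l : List ℕ} {i j : Fin l.length} : pat l i j ↔ l[i] = l[j] := Iff.rfl

section Patterns

variable {n : ℕ} (σ : Setoid (Fin n))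

theorem sContains_pat122_iff :
    SContains σ (pat [1, 2, 2]) ↔ ∃ a b c, a < b ∧ b < c ∧ σ b c ∧ ¬ σ a b := by
  constructor
  · rintro ⟨f, hf, hσ⟩
    refine ⟨f 0, f 1, f 2, hf (by decide), hf (by decide), (hσ 1 2).2 rfl, fun h => ?_⟩
    exact absurd (pat_rel_iff.1 ((hσ 0 1).1 h)) (by decide)
  · rintro ⟨a, b, c, hab, hbc, hσbc, hσab⟩
    have hσac : ¬ σ a c := fun h => hσab (σ.trans h (σ.symm hσbc))
    refine ⟨![a, b, c], by simp [hab, hbc], fun i j => ?_⟩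
    rw [pat_rel_iff]
    fin_cases i <;> fin_cases j <;> simp [hσbc, hσab, hσac, Setoid.comm' σ]

theorem sContains_pat1213_iff :
    SContains σ (pat [1, 2, 1, 3]) ↔
      ∃ a b c d, a < b ∧ b < c ∧ c < d ∧ σ a c ∧ ¬ σ a b ∧ ¬ σ a d ∧ ¬ σ b d := by
  constructor
  · rintro ⟨f, hf, hσ⟩
    refine ⟨f 0, f 1, f 2, f 3, hf (by decide), hf (by decide), hf (by decide),
      (hσ 0 2).2 rfl, ?_, ?_, ?_⟩ <;> intro h
    · exact absurd (pat_rel_iff.1 ((hσ 0 1).1 h)) (by decide)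
    · exact absurd (pat_rel_iff.1 ((hσ 0 3).1 h)) (by decide)
    · exact absurd (pat_rel_iff.1 ((hσ 1 3).1 h)) (by decide)
  · rintro ⟨a, b, c, d, hab, hbc, hcd, hσac, hσab, hσad, hσbd⟩
    have hσbc : ¬ σ b c := fun h => hσab (σ.trans hσac (σ.symm h))
    have hσcd : ¬ σ c d := fun h => hσad (σ.trans hσac h)
    refine ⟨![a, b, c, d], by simp [hab, hbc, hcd], fun i j => ?_⟩
    rw [pat_rel_iff]
    fin_cases i <;> fin_cases j <;> simp [hσac, hσab, hσad, hσbd, hσbc, hσcd, Setoid.comm' σ]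

end Patterns

section BlockSetoid

variable {α : Type*}

def blockSetoid (s : Set α) : Setoid α where
  r x y := x = y ∨ x ∈ s ∧ y ∈ s
  iseqv :=
    { refl := fun _ => Or.inl rfl
      symm := by rintro x y (rfl | ⟨hx, hy⟩) <;> simp_all
      trans := by rintro x y z (rfl | ⟨hx, hy⟩) (rfl | ⟨hy', hz⟩) <;> simp_all }

theorem blockSetoid_rel_iff {s : Set α} {x y : α} :
    blockSetoid s x y ↔ x = y ∨ x ∈ s ∧ y ∈ s := Iff.rfl

theorem blockSetoid_inj {s t : Set α} {z : α} (hs : z ∈ s) (ht : z ∈ t) :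
    blockSetoid s = blockSetoid t ↔ s = t := by
  refine ⟨fun h => Set.ext fun x => ?_, congrArg blockSetoid⟩
  obtain rfl | hx := eq_or_ne z x
  · exact iff_of_true hs ht
  · simpa [blockSetoid_rel_iff, hx, hs, ht] using Setoid.ext_iff.1 h z x

end BlockSetoid

variable {n : ℕ}

theorem eq_blockSetoid_of_not_sContains_pat122 {σ : Setoid (Fin (n + 1))}
    (h : ¬ SContains σ (pat [1, 2, 2])) : σ = blockSetoid {x | σ 0 x} := by
  rw [sContains_pat122_iff] at h
  push Not at h
  have block_of_lt : ∀ x y, x < y → σ x y → σ 0 x ∧ σ 0 y := by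
    intro x y hxy hσxy
    obtain rfl | hx := eq_or_ne x 0
    · exact ⟨σ.refl _, hσxy⟩
    · have h0x := h 0 x y (Fin.pos_iff_ne_zero.2 hx) hxy hσxy
      exact ⟨h0x, σ.trans h0x hσxy⟩
  ext x y
  refine ⟨fun hσxy => ?_, ?_⟩
  · rcases lt_trichotomy x y with hxy | rfl | hxy
    · exact Or.inr (block_of_lt x y hxy hσxy)
    · exact Or.inl rfl
    · exact Or.inr (block_of_lt y x hxy (σ.symm hσxy)).symm
  · rintro (rfl | ⟨hx, hy⟩)
    · exact σ.refl x
    · exact σ.trans (σ.symm hx) hy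

theorem not_sContains_pat122_blockSetoid_iff {s : Set (Fin n)} :
    ¬ SContains (blockSetoid s) (pat [1, 2, 2]) ↔
      ∀ a b c, a < b → b < c → b ∈ s → c ∈ s → a ∈ s := by
  rw [sContains_pat122_iff]
  push Not
  refine forall₃_congr fun a b c => ?_
  simp only [blockSetoid_rel_iff]
  grind

theorem not_sContains_pat1213_blockSetoid_iff {s : Set (Fin n)} :
    ¬ SContains (blockSetoid s) (pat [1, 2, 1, 3]) ↔
      ∀ a b c d, a < b → b < c → c < d → a ∈ s → c ∈ s → b ∈ s ∨ d ∈ s := by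
  rw [sContains_pat1213_iff]
  push Not
  refine forall₄_congr fun a b c d => ?_
  simp only [blockSetoid_rel_iff]
  grind

theorem eq_last_of_gap_lt {s : Set (Fin (n + 1))} (h0 : 0 ∈ s)
    (h122 : ∀ a b c, a < b → b < c → b ∈ s → c ∈ s → a ∈ s)
    (h1213 : ∀ a b c d, a < b → b < c → c < d → a ∈ s → c ∈ s → b ∈ s ∨ d ∈ s)
    {b c : Fin (n + 1)} (hb : b ∉ s) (hbc : b < c) (hc : c ∈ s) : c = Fin.last n := by
  have h0b : 0 < b := Fin.pos_iff_ne_zero.2 fun h => hb (h ▸ h0)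
  by_contra hc_last
  have hc_lt : c < Fin.last n := Fin.lt_last_iff_ne_last.2 hc_last
  rcases h1213 0 b c _ h0b hbc hc_lt h0 hc with hb' | hlast
  exacts [hb hb', hb (h122 b c _ hbc hc_lt hc hlast)]

def avoidingBlock (m : ℕ) : Fin (m + 2) ⊕ Fin m → Set (Fin (m + 2))
  | .inl k => {x | x.val ≤ k}
  | .inr k => {x | x.val ≤ k ∨ x.val = m + 1}

variable {m : ℕ}

theorem zero_mem_avoidingBlock (i : Fin (m + 2) ⊕ Fin m) : 0 ∈ avoidingBlock m i := by
  cases i <;> simp [avoidingBlock]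

theorem avoidingBlock_injective : Function.Injective (avoidingBlock m) := by
  intro i j hij
  have hmem := fun x => Set.ext_iff.1 hij x
  rcases i with k | k <;> rcases j with k' | k' <;>
    simp only [avoidingBlock, Set.mem_ofPred_eq, Sum.inl.injEq, Sum.inr.injEq, reduceCtorEq,
      Fin.ext_iff] at hmem ⊢
  · exact le_antisymm ((hmem k).1 le_rfl) ((hmem k').2 le_rfl)
  · have h1 : m + 1 ≤ (k : ℕ) := (hmem (Fin.last _)).2 (Or.inr rfl)
    have h2 : (k' : ℕ) + 1 ≤ k' ∨ (k' : ℕ) + 1 = m + 1 :=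
      (hmem ⟨k' + 1, by omega⟩).1 (show (k' : ℕ) + 1 ≤ k by omega)
    omega
  · have h1 : m + 1 ≤ (k' : ℕ) := (hmem (Fin.last _)).1 (Or.inr rfl)
    have h2 : (k : ℕ) + 1 ≤ k ∨ (k : ℕ) + 1 = m + 1 :=
      (hmem ⟨k + 1, by omega⟩).2 (show (k : ℕ) + 1 ≤ k' by omega)
    omega
  · have h1 : (k : ℕ) ≤ k' ∨ (k : ℕ) = m + 1 := (hmem ⟨k, by omega⟩).1 (Or.inl le_rfl)
    have h2 : (k' : ℕ) ≤ k ∨ (k' : ℕ) = m + 1 := (hmem ⟨k', by omega⟩).2 (Or.inl le_rfl)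
    omega

theorem not_sContains_blockSetoid_avoidingBlock (i : Fin (m + 2) ⊕ Fin m) :
    ¬ SContains (blockSetoid (avoidingBlock m i)) (pat [1, 2, 2]) ∧
      ¬ SContains (blockSetoid (avoidingBlock m i)) (pat [1, 2, 1, 3]) := by
  rw [not_sContains_pat122_blockSetoid_iff, not_sContains_pat1213_blockSetoid_iff]
  simp only [Fin.lt_def]
  rcases i with k | k <;> simp only [avoidingBlock, Set.mem_ofPred_eq] <;> constructor <;>
    intros <;> omega

theorem exists_avoidingBlock_eq {s : Set (Fin (m + 2))} (h0 : 0 ∈ s)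
    (h122 : ∀ a b c, a < b → b < c → b ∈ s → c ∈ s → a ∈ s)
    (h1213 : ∀ a b c d, a < b → b < c → c < d → a ∈ s → c ∈ s → b ∈ s ∨ d ∈ s) :
    ∃ i, avoidingBlock m i = s := by
  classical
  -- with `g` the least value missed by `s`, `s` is `{0, …, g - 1}`, possibly with `Fin.last` added
  have hgap : ∃ g, ∀ x ∈ s, x.val ≠ g := ⟨m + 2, fun x _ => x.isLt.ne⟩
  set g := Nat.find hgap
  have hg : ∀ x ∈ s, x.val ≠ g := Nat.find_spec hgap
  have hg_le : g ≤ m + 2 := Nat.find_min' hgap fun x _ => x.isLt.ne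
  have hg0 : 0 < g := Nat.pos_of_ne_zero (hg 0 h0).symm
  have below : ∀ x : Fin (m + 2), x.val < g → x ∈ s := by
    intro x hx
    obtain ⟨y, hy, hyx⟩ : ∃ y ∈ s, y.val = x.val := by
      simpa using Nat.find_min hgap hx
    exact Fin.ext hyx ▸ hy
  have above : ∀ c ∈ s, g < c.val → c = Fin.last (m + 1) := fun c hc hgc =>
    eq_last_of_gap_lt h0 h122 h1213 (b := ⟨g, by omega⟩) (fun hb => hg _ hb rfl) hgc hc
  by_cases hlast : Fin.last (m + 1) ∈ s ∧ g ≤ m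
  · refine ⟨.inr ⟨g - 1, by omega⟩, Set.ext fun x => ?_⟩
    simp only [avoidingBlock, Set.mem_ofPred_eq]
    constructor
    · rintro (hx | hx)
      · exact below x (by omega)
      · exact (Fin.ext (by simpa using hx) : x = Fin.last (m + 1)) ▸ hlast.1
    · intro hx
      have hxg := hg x hx
      by_cases hgx : g < x.val
      · simp [above x hx hgx]
      · omega
  · refine ⟨.inl ⟨g - 1, by omega⟩, Set.ext fun x => ?_⟩
    simp only [avoidingBlock, Set.mem_ofPred_eq]
    refine ⟨fun hx => below x (by omega), fun hx => ?_⟩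
    have hxg := hg x hx
    by_cases hgx : g < x.val
    · obtain rfl := above x hx hgx
      rw [Fin.val_last] at hgx
      exact absurd ⟨hx, by omega⟩ hlast
    · omega

theorem stmt12 (n : ℕ) (hn : 2 ≤ n) :
    Nat.card {σ : Setoid (Fin n) //
      ¬ SContains σ (pat [1, 2, 2]) ∧ ¬ SContains σ (pat [1, 2, 1, 3])} =
    2 * (n - 1) := by
  obtain ⟨m, rfl⟩ : ∃ m, n = m + 2 := ⟨n - 2, by omega⟩
  let f (i : Fin (m + 2) ⊕ Fin m) : {σ : Setoid (Fin (m + 2)) //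
      ¬ SContains σ (pat [1, 2, 2]) ∧ ¬ SContains σ (pat [1, 2, 1, 3])} :=
    ⟨blockSetoid (avoidingBlock m i), not_sContains_blockSetoid_avoidingBlock i⟩
  have hf : Function.Bijective f := by
    refine ⟨fun i j hij => avoidingBlock_injective ?_, ?_⟩
    · exact (blockSetoid_inj (zero_mem_avoidingBlock i) (zero_mem_avoidingBlock j)).1
        (congrArg Subtype.val hij)
    rintro ⟨σ, h122, h1213⟩
    have hσ := eq_blockSetoid_of_not_sContains_pat122 h122
    rw [hσ, not_sContains_pat122_blockSetoid_iff] at h122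
    rw [hσ, not_sContains_pat1213_blockSetoid_iff] at h1213
    obtain ⟨i, hi⟩ := exists_avoidingBlock_eq (σ.refl 0) h122 h1213
    exact ⟨i, Subtype.ext ((congrArg blockSetoid hi).trans hσ.symm)⟩
  rw [← Nat.card_eq_of_bijective f hf, Nat.card_sum, Nat.card_fin, Nat.card_fin]
  omega
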